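/- arXiv:1005.1495 — 6 statements merged into one kernel-verified Lean document; each statement's English description precedes it below -/
import Mathlib

section
/- Let H be a real Hilbert space, L and T closed operators on H with T skew-symmetric, and let Π be the orthogonal projection onto the null space of L. Assume Π T Π = 0. Define A := (1 + (TΠ)*(TΠ))^{-1}(TΠ)*. Then for all f in H, ‖Af‖ ≤ (1/2)‖(1−Π)f‖. -/
open scoped RealInnerProductSpace
open ContinuousLinearMap

/-- Lemma 1, first inequality: in a real Hilbert space, with `L`, `T` (bounded, hence closed)
operators, `T` skew-symmetric, `P` the orthogonal projection onto the null space of `L`,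
`P T P = 0`, and `A = (1 + (TP)*(TP))⁻¹ (TP)*` (characterized by its defining equation),
one has `‖A f‖ ≤ (1/2) ‖(1 - P) f‖` for all `f`. -/
theorem stmt_0 {H : Type*} [NormedAddCommGroup H] [InnerProductSpace ℝ H] [CompleteSpace H]
    (L T P A : H →L[ℝ] H)
    (hP_idem : P ∘L P = P)
    (hP_sa : ContinuousLinearMap.adjoint P = P)
    (hP_ker : ∀ f, L (P f) = 0)
    (hP_ker' : ∀ f, L f = 0 → P f = f)
    (hT_skew : ∀ f g, ⟪T f, g⟫ = -⟪f, T g⟫)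
    (hPTP : P ∘L (T ∘L P) = 0)
    (hA : (1 + (ContinuousLinearMap.adjoint (T ∘L P)) ∘L (T ∘L P)) ∘L A
        = ContinuousLinearMap.adjoint (T ∘L P)) :
    ∀ f : H, ‖A f‖ ≤ (1/2) * ‖f - P f‖ := by
  intro f
  set B := T ∘L P with hB
  set g := A f with hg
  -- the defining equation applied to f
  have hAf : g + adjoint B (B g) = adjoint B f := by
    have := congrArg (fun S => S f) hA
    simpa [hB, hg] using this
  -- range of adjoint B lies in range of P
  have hPB : ∀ x, P (adjoint B x) = adjoint B x := by
    intro x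
    have h1 : adjoint B = P ∘L adjoint T := by
      rw [hB, adjoint_comp, hP_sa]
    have := congrArg (fun S => S (adjoint T x)) hP_idem
    simp only [comp_apply] at this
    simp [h1, this]
  -- P g = g
  have hPg : P g = g := by
    have : g = adjoint B f - adjoint B (B g) := by
      rw [← hAf]; abel
    rw [this]
    simp [map_sub, hPB]
  -- inner product identity
  have hinner : ‖g‖ ^ 2 + ‖B g‖ ^ 2 = ⟪f - P f, B g⟫ := by
    have h1 : ⟪g + adjoint B (B g), g⟫ = ⟪adjoint B f, g⟫ :=
      congrArg (fun x => ⟪x, g⟫) hAf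
    rw [inner_add_left, adjoint_inner_left, adjoint_inner_left] at h1
    have hPfBg : ⟪P f, B g⟫ = 0 := by
      have hPsa : ∀ x y : H, ⟪P x, y⟫ = ⟪x, P y⟫ := by
        intro x y
        conv_lhs => rw [← hP_sa]
        rw [adjoint_inner_left]
      have hBg : B g = T (P g) := by simp [hB]
      rw [hBg, hPsa]
      have := congrArg (fun S => S g) hPTP
      simp only [comp_apply, zero_apply] at this
      rw [hBg] at this
      rw [this, inner_zero_right]
    rw [inner_sub_left, hPfBg, sub_zero]
    rw [real_inner_self_eq_norm_sq, real_inner_self_eq_norm_sq] at h1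
    linarith [h1]
  have hcs : ⟪f - P f, B g⟫ ≤ ‖f - P f‖ * ‖B g‖ := real_inner_le_norm _ _
  have key : ‖g‖ ^ 2 + ‖B g‖ ^ 2 ≤ ‖f - P f‖ * ‖B g‖ := by
    rw [hinner]; exact hcs
  nlinarith [norm_nonneg g, norm_nonneg (B g), norm_nonneg (f - P f),
    sq_nonneg (‖f - P f‖ / 2 - ‖B g‖), sq_nonneg (‖g‖ - (1/2) * ‖f - P f‖)]
end

section
/- Let H be a real Hilbert space, T skew-symmetric, Π an orthogonal projection with ΠTΠ = 0, and A := (1 + (TΠ)*(TΠ))^{-1}(TΠ)*. Then A = ΠA, and for all f in H, ‖TA f‖ ≤ ‖(1−Π)f‖. -/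
open scoped RealInnerProductSpace
open ContinuousLinearMap

/-- Lemma 1, second part: `A = P A` and `‖T A f‖ ≤ ‖(1 - P) f‖`, where `P` is the orthogonal
projection onto the null space of the symmetric operator `L`, `T` is skew-symmetric,
`P T P = 0`, and `A = (1 + (TP)*(TP))⁻¹ (TP)*`. -/
theorem stmt_1 {H : Type*} [NormedAddCommGroup H] [InnerProductSpace ℝ H] [CompleteSpace H]
    (L T P A : H →L[ℝ] H)
    (hL_sym : ∀ f g, ⟪L f, g⟫ = ⟪f, L g⟫)
    (hP_idem : P ∘L P = P)
    (hP_sa : ContinuousLinearMap.adjoint P = P)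
    (hP_ker : ∀ f, L (P f) = 0)
    (hP_ker' : ∀ f, L f = 0 → P f = f)
    (hT_skew : ∀ f g, ⟪T f, g⟫ = -⟪f, T g⟫)
    (hPTP : P ∘L (T ∘L P) = 0)
    (hA : (1 + (ContinuousLinearMap.adjoint (T ∘L P)) ∘L (T ∘L P)) ∘L A
        = ContinuousLinearMap.adjoint (T ∘L P)) :
    A = P ∘L A ∧ ∀ f : H, ‖T (A f)‖ ≤ ‖f - P f‖ := by
  set B : H →L[ℝ] H := T ∘L P with hB
  set Bs : H →L[ℝ] H := ContinuousLinearMap.adjoint B with hBs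
  -- P ∘ Bs = Bs
  have hPBs : P ∘L Bs = Bs := by
    rw [hBs, hB, adjoint_comp, hP_sa, ← comp_assoc, hP_idem]
  have hPBs' : ∀ x, P (Bs x) = Bs x := fun x =>
    congrFun (congrArg DFunLike.coe hPBs) x
  -- Bs ∘ P = 0
  have hBsP : Bs ∘L P = 0 := by
    rw [hBs, ← hP_sa, ← adjoint_comp, hB, hPTP]
    exact map_zero (ContinuousLinearMap.adjoint : (H →L[ℝ] H) ≃ₗᵢ⋆[ℝ] (H →L[ℝ] H))
  have hBsP' : ∀ x, Bs (P x) = 0 := fun x =>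
    congrFun (congrArg DFunLike.coe hBsP) x
  -- pointwise form of hA
  have hA' : ∀ f, A f + Bs (B (A f)) = Bs f := by
    intro f
    have := congrFun (congrArg DFunLike.coe hA) f
    simpa [add_comp, comp_apply, one_def] using this
  -- A = P A pointwise
  have h1 : ∀ f, P (A f) = A f := by
    intro f
    have h2 : A f = Bs f - Bs (B (A f)) := eq_sub_of_add_eq (hA' f)
    rw [h2, map_sub, hPBs', hPBs']
  constructor
  · ext f
    exact (h1 f).symm
  · intro f
    set g : H := A f with hg
    have hgf : g + Bs (B g) = Bs f := hA' f
    have hTAg : T (A f) = B g := by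
      rw [hB, comp_apply, h1 f]
    have key : ‖g‖ ^ 2 + ‖B g‖ ^ 2 = ⟪f - P f, B g⟫ := by
      have e1 : ⟪g + Bs (B g), g⟫ = ⟪Bs f, g⟫ := by rw [hgf]
      have e2 : ⟪Bs (B g), g⟫ = ⟪B g, B g⟫ := adjoint_inner_left B g (B g)
      have e3 : ⟪Bs f, g⟫ = ⟪f, B g⟫ := adjoint_inner_left B g f
      have e4 : ⟪P f, B g⟫ = 0 := by
        have h := adjoint_inner_left B g (P f)
        rw [← hBs, hBsP'] at h
        simpa using h.symm
      rw [inner_add_left, e2, e3] at e1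
      rw [inner_sub_left, e4, sub_zero, ← e1,
        real_inner_self_eq_norm_sq, real_inner_self_eq_norm_sq]
    have hle : ‖B g‖ ^ 2 ≤ ‖f - P f‖ * ‖B g‖ := by
      have h5 : ⟪f - P f, B g⟫ ≤ ‖f - P f‖ * ‖B g‖ := real_inner_le_norm _ _
      nlinarith [sq_nonneg ‖g‖]
    rw [hTAg]
    nlinarith [norm_nonneg (B g), norm_nonneg (f - P f)]
end

section
/- In the abstract hypocoercivity framework, the operator ATΠ = (1 + (TΠ)*(TΠ))^{-1}(TΠ)*(TΠ) satisfies: if ‖TΠf‖² ≥ λ_M ‖Πf‖² for all f with Πf in the domain of T (macroscopic coercivity with constant λ_M > 0), then ⟨ATΠ f, f⟩ ≥ (λ_M/(1+λ_M)) ‖Πf‖² for all f. -/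
open scoped RealInnerProductSpace
open ContinuousLinearMap

/-!
Write `S = TΠ` and `B = S*S`, so that `ATΠ = (1 + B)⁻¹ B`. For `u = (1 + B)⁻¹ B f` and
`v = f - u` one has `B v = u`, hence `Πf = Πv + Bv` (the range of `S*` lies in the range of `Π`)
and `⟨u, f⟩ = ‖Sv‖² + ‖Bv‖²`, while `‖Πf‖² = ‖Πv‖² + 2‖Sv‖² + ‖Bv‖²`. Macroscopic coercivity
gives `λ‖Πv‖² ≤ ‖Sv‖²`, and together with Cauchy–Schwarz in `‖Sv‖² = ⟨Bv, Πv⟩` it also gives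
`λ‖Sv‖² ≤ ‖Bv‖²`; these two inequalities are exactly what the bound needs.
-/

theorem div_one_add_mul_le_of_mul_le {lam a b c : ℝ} (hlam : 0 ≤ lam) (hab : lam * a ≤ b)
    (hbc : lam * b ≤ c) : lam / (1 + lam) * (a + 2 * b + c) ≤ b + c := by
  rw [div_mul_eq_mul_div, div_le_iff₀ (by linarith)]
  linarith

section

variable {H : Type*} [NormedAddCommGroup H] [InnerProductSpace ℝ H] [CompleteSpace H]
  {S P : H →L[ℝ] H}

theorem comp_adjoint_eq_of_comp_eq (hP_idem : P ∘L P = P) (hP_sa : adjoint P = P)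
    (hSP : S ∘L P = S) : P ∘L adjoint S = adjoint S := by
  rw [← hSP, adjoint_comp, hP_sa, ← comp_assoc, hP_idem]

theorem inner_adjoint_apply_self_eq_norm_sq (x : H) : ⟪adjoint S (S x), x⟫ = ‖S x‖ ^ 2 := by
  rw [adjoint_inner_left, real_inner_self_eq_norm_sq]

theorem mul_norm_sq_le_norm_adjoint_apply_sq (hSP : S ∘L P = S) {lam : ℝ} (hlam : 0 ≤ lam)
    (hcoer : ∀ x, lam * ‖P x‖ ^ 2 ≤ ‖S x‖ ^ 2) (x : H) :
    lam * ‖S x‖ ^ 2 ≤ ‖adjoint S (S x)‖ ^ 2 := by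
  have hcs : ‖S x‖ ^ 2 ≤ ‖adjoint S (S x)‖ * ‖P x‖ :=
    calc ‖S x‖ ^ 2 = ⟪adjoint S (S x), P x⟫ := by
          rw [adjoint_inner_left, ← comp_apply, hSP, real_inner_self_eq_norm_sq]
      _ ≤ ‖adjoint S (S x)‖ * ‖P x‖ := real_inner_le_norm _ _
  rcases (sq_nonneg ‖S x‖).eq_or_lt with h0 | hpos
  · rw [← h0, mul_zero]
    positivity
  · refine le_of_mul_le_mul_right ?_ hpos
    calc lam * ‖S x‖ ^ 2 * ‖S x‖ ^ 2 ≤ lam * (‖adjoint S (S x)‖ * ‖P x‖) ^ 2 := by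
          rw [mul_assoc, ← sq]
          gcongr
      _ = ‖adjoint S (S x)‖ ^ 2 * (lam * ‖P x‖ ^ 2) := by ring
      _ ≤ ‖adjoint S (S x)‖ ^ 2 * ‖S x‖ ^ 2 := by gcongr; exact hcoer x

theorem div_one_add_mul_norm_sq_le_inner (hP_idem : P ∘L P = P) (hP_sa : adjoint P = P)
    (hSP : S ∘L P = S) {lam : ℝ} (hlam : 0 ≤ lam) (hcoer : ∀ x, lam * ‖P x‖ ^ 2 ≤ ‖S x‖ ^ 2)
    {u v : H} (huv : adjoint S (S v) = u) :
    lam / (1 + lam) * ‖P (v + u)‖ ^ 2 ≤ ⟪u, v + u⟫ := by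
  have hPu : P u = u := by
    rw [← huv, ← comp_apply P, comp_adjoint_eq_of_comp_eq hP_idem hP_sa hSP]
  have hPv_u : ⟪P v, u⟫ = ‖S v‖ ^ 2 := by
    rw [← huv, adjoint_inner_right, ← comp_apply S P, hSP, real_inner_self_eq_norm_sq]
  have hnorm : ‖P (v + u)‖ ^ 2 = ‖P v‖ ^ 2 + 2 * ‖S v‖ ^ 2 + ‖u‖ ^ 2 := by
    rw [map_add, hPu, norm_add_sq_real, hPv_u]
  have hinner : ⟪u, v + u⟫ = ‖S v‖ ^ 2 + ‖u‖ ^ 2 := by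
    rw [inner_add_right, ← huv, inner_adjoint_apply_self_eq_norm_sq, real_inner_self_eq_norm_sq]
  rw [hnorm, hinner]
  refine div_one_add_mul_le_of_mul_le hlam (hcoer v) ?_
  rw [← huv]
  exact mul_norm_sq_le_norm_adjoint_apply_sq hSP hlam hcoer v

end

theorem stmt_2_general {H : Type*} [NormedAddCommGroup H] [InnerProductSpace ℝ H] [CompleteSpace H]
    (T P A : H →L[ℝ] H) (lam_M : ℝ) (hlam : 0 < lam_M)
    (hP_idem : P ∘L P = P)
    (hP_sa : ContinuousLinearMap.adjoint P = P)
    (hA : (1 + (ContinuousLinearMap.adjoint (T ∘L P)) ∘L (T ∘L P)) ∘L A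
        = ContinuousLinearMap.adjoint (T ∘L P))
    (hmacro : ∀ f : H, lam_M * ‖P f‖ ^ 2 ≤ ‖T (P f)‖ ^ 2) :
    ∀ f : H, lam_M / (1 + lam_M) * ‖P f‖ ^ 2 ≤ ⟪(A ∘L (T ∘L P)) f, f⟫ := by
  intro f
  set S := T ∘L P
  have hSP : S ∘L P = S := by rw [comp_assoc, hP_idem]
  have hv : adjoint S (S (f - A (S f))) = A (S f) := by
    have hAf : A (S f) + adjoint S (S (A (S f))) = adjoint S (S f) := congr($hA (S f))
    rw [map_sub, map_sub, ← hAf, add_sub_cancel_right]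
  simpa only [sub_add_cancel, comp_apply] using div_one_add_mul_norm_sq_le_inner hP_idem hP_sa hSP hlam.le hmacro hv

/-- Macroscopic coercivity transfers to the operator `A T P = (1+(TP)*(TP))⁻¹ (TP)*(TP)`:
if `‖T P f‖² ≥ λ_M ‖P f‖²` for all `f`, then `⟨A T P f, f⟩ ≥ (λ_M/(1+λ_M)) ‖P f‖²`. -/
theorem stmt_2 {H : Type*} [NormedAddCommGroup H] [InnerProductSpace ℝ H] [CompleteSpace H]
    (T P A : H →L[ℝ] H) (lam_M : ℝ) (hlam : 0 < lam_M)
    (hP_idem : P ∘L P = P)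
    (hP_sa : ContinuousLinearMap.adjoint P = P)
    (hT_skew : ∀ f g, ⟪T f, g⟫ = -⟪f, T g⟫)
    (hPTP : P ∘L (T ∘L P) = 0)
    (hA : (1 + (ContinuousLinearMap.adjoint (T ∘L P)) ∘L (T ∘L P)) ∘L A
        = ContinuousLinearMap.adjoint (T ∘L P))
    (hmacro : ∀ f : H, lam_M * ‖P f‖ ^ 2 ≤ ‖T (P f)‖ ^ 2) :
    ∀ f : H, lam_M / (1 + lam_M) * ‖P f‖ ^ 2 ≤ ⟪(A ∘L (T ∘L P)) f, f⟫ :=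
  stmt_2_general T P A lam_M hlam hP_idem hP_sa hA hmacro
end

section
/- Let H be a Hilbert space, L symmetric with −⟨Lf,f⟩ ≥ λ_m‖(1−Π)f‖² (microscopic coercivity), T skew-symmetric with ‖TΠf‖² ≥ λ_M‖Πf‖² (macroscopic coercivity), ΠTΠ = 0, and assume the operators AT(1−Π) and AL are bounded with ‖AT(1−Π)f‖ + ‖ALf‖ ≤ C_M‖(1−Π)f‖, where A := (1+(TΠ)*(TΠ))^{-1}(TΠ)*. Then there exist explicit constants λ > 0 and C ≥ 1, depending only on λ_m, λ_M, C_M, such that ‖e^{t(L−T)} f_I‖ ≤ C e^{−λt} ‖f_I‖ for all f_I in H and all t ≥ 0. -/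
/-!
The modified entropy `E(f) = ‖f‖²/2 + ε⟪A f, f⟫` is equivalent to `‖f‖²` for `ε ≤ 1/2`, because
`‖A f‖ ≤ ‖(1 - P) f‖ / 2`. Along a solution its derivative is
`⟪L f, f⟫ + ε (⟪A (L - T) f, f⟫ + ⟪A f, (L - T) f⟫)`: the first term controls `‖(1 - P) f‖²` by
microscopic coercivity, while `⟪A T P f, f⟫ ≥ λ_M / (1 + λ_M) ‖P f‖²` (macroscopic coercivity seen
through `A`) supplies the missing control of `‖P f‖²`; the remaining terms are cross terms bounded
through `A T (1 - P)` and `A L`. For small `ε` the derivative is therefore at most `-c E(f)`, and Grönwall gives the decay.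
-/

open scoped RealInnerProductSpace
open ContinuousLinearMap Real

namespace Hypocoercivity

-- `2k` times the difference of the two sides is `(2kλ - ε(2k + k² + C²)) X² + ε (kY - CX)²`.
lemma quadratic_le {lam C k ε X Y : ℝ} (hk : 0 < k) (hε0 : 0 ≤ ε)
    (hε : ε * (2 * k + k ^ 2 + C ^ 2) ≤ 2 * k * lam) :
    -(lam * X ^ 2) + ε * (C * X * Y - k * Y ^ 2 + X ^ 2) ≤ -(ε * k / 2) * (X ^ 2 + Y ^ 2) := by
  refine le_of_mul_le_mul_left ?_ (by positivity : 0 < 2 * k)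
  nlinarith [mul_nonneg hε0 (sq_nonneg (k * Y - C * X)), mul_nonneg (sub_nonneg.2 hε) (sq_nonneg X)]

lemma exists_pos_le_half_mul_le {a b : ℝ} (ha : 0 < a) (hb : 0 < b) :
    ∃ ε : ℝ, 0 < ε ∧ ε ≤ 1 / 2 ∧ ε * b ≤ a :=
  ⟨min (1 / 2) (a / b), lt_min (by norm_num) (div_pos ha hb), min_le_left _ _,
    (mul_le_mul_of_nonneg_right (min_le_right _ _) hb.le).trans (div_mul_cancel₀ a hb.ne').le⟩

lemma le_exp_mul_of_hasDerivAt_le {φ φ' : ℝ → ℝ} {κ t : ℝ}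
    (hφ : ∀ s, HasDerivAt φ (φ' s) s) (hle : ∀ s, φ' s ≤ -κ * φ s) (ht : 0 ≤ t) :
    φ t ≤ exp (-κ * t) * φ 0 := by
  have hψ (s : ℝ) :
      HasDerivAt (fun s => exp (κ * s) * φ s) (exp (κ * s) * (κ * φ s + φ' s)) s := by
    refine (((hasDerivAt_id s).const_mul κ).exp.mul (hφ s)).congr_deriv ?_
    rw [id]
    ring
  have hanti := antitone_of_hasDerivAt_nonpos hψ fun s =>
    mul_nonpos_of_nonneg_of_nonpos (exp_pos _).le (by linarith [hle s])
  have h := hanti ht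
  simp only [mul_zero, exp_zero, one_mul] at h
  calc φ t = exp (-κ * t) * (exp (κ * t) * φ t) := by
        rw [← mul_assoc, ← exp_add, neg_mul, neg_add_cancel, exp_zero, one_mul]
    _ ≤ exp (-κ * t) * φ 0 := by gcongr

lemma le_two_mul_exp_of_sq_le {x y κ t : ℝ} (hx : 0 ≤ x) (hy : 0 ≤ y)
    (h : x ^ 2 / 4 ≤ exp (-κ * t) * (3 / 4 * y ^ 2)) : x ≤ 2 * exp (-(κ / 2) * t) * y := by
  have hexp : exp (-(κ / 2) * t) ^ 2 = exp (-κ * t) := by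
    rw [sq, ← exp_add]
    ring_nf
  refine (pow_le_pow_iff_left₀ hx (by positivity) two_ne_zero).mp ?_
  rw [mul_pow, mul_pow, hexp]
  nlinarith [mul_nonneg (exp_pos (-κ * t)).le (sq_nonneg y)]

variable {H : Type*} [NormedAddCommGroup H] [InnerProductSpace ℝ H]

noncomputable def modifiedEntropy (A : H →L[ℝ] H) (ε : ℝ) (g : H) : ℝ := ‖g‖ ^ 2 / 2 + ε * ⟪A g, g⟫

section ModifiedEntropy

variable {A : H →L[ℝ] H} {ε : ℝ}

lemma hasDerivAt_modifiedEntropy {f : ℝ → H} {f' : H} {t : ℝ} (hf : HasDerivAt f f' t) :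
    HasDerivAt (fun s => modifiedEntropy A ε (f s))
      (⟪f', f t⟫ + ε * (⟪A f', f t⟫ + ⟪A (f t), f'⟫)) t := by
  refine ((hf.norm_sq.div_const 2).add
    (((A.hasFDerivAt.comp_hasDerivAt t hf).inner ℝ hf).const_mul ε)).congr_deriv ?_
  rw [real_inner_comm (f t) f', Function.comp_apply]
  ring

lemma le_modifiedEntropy {g : H} (hAg : |⟪A g, g⟫| ≤ ‖g‖ ^ 2 / 2) (hε0 : 0 ≤ ε)
    (hε : ε ≤ 1 / 2) : ‖g‖ ^ 2 / 4 ≤ modifiedEntropy A ε g := by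
  unfold modifiedEntropy
  nlinarith [mul_le_mul_of_nonneg_left (abs_le.mp hAg).1 hε0,
    mul_nonneg (sub_nonneg.2 hε) (sq_nonneg ‖g‖)]

lemma modifiedEntropy_le {g : H} (hAg : |⟪A g, g⟫| ≤ ‖g‖ ^ 2 / 2) (hε0 : 0 ≤ ε)
    (hε : ε ≤ 1 / 2) : modifiedEntropy A ε g ≤ 3 / 4 * ‖g‖ ^ 2 := by
  unfold modifiedEntropy
  nlinarith [mul_le_mul_of_nonneg_left (abs_le.mp hAg).2 hε0,
    mul_nonneg (sub_nonneg.2 hε) (sq_nonneg ‖g‖)]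

end ModifiedEntropy

section Projection

variable {P : H →L[ℝ] H}

lemma proj_apply_proj (hP_idem : P ∘L P = P) (x : H) : P (P x) = P x :=
  DFunLike.congr_fun hP_idem x

variable [CompleteSpace H]

lemma inner_proj_left (hP_sa : adjoint P = P) (x y : H) : ⟪P x, y⟫ = ⟪x, P y⟫ := by
  simpa [hP_sa] using adjoint_inner_left P y x

lemma norm_sq_eq_norm_sub_proj_sq_add (hP_idem : P ∘L P = P) (hP_sa : adjoint P = P) (g : H) :
    ‖g‖ ^ 2 = ‖g - P g‖ ^ 2 + ‖P g‖ ^ 2 := by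
  have horth : ⟪g - P g, P g⟫ = 0 := by
    rw [← inner_proj_left hP_sa, map_sub, proj_apply_proj hP_idem, sub_self, inner_zero_left]
  simpa [sq] using norm_add_sq_eq_norm_sq_add_norm_sq_real horth

lemma norm_sub_proj_le (hP_idem : P ∘L P = P) (hP_sa : adjoint P = P) (g : H) :
    ‖g - P g‖ ≤ ‖g‖ := by
  have := norm_sq_eq_norm_sub_proj_sq_add hP_idem hP_sa g
  nlinarith [norm_nonneg (g - P g), norm_nonneg g, sq_nonneg ‖P g‖]

end Projection

section AuxiliaryOperator

variable [CompleteSpace H] {P A B : H →L[ℝ] H}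

lemma apply_add_adjoint_apply (hA : (1 + adjoint B ∘L B) ∘L A = adjoint B) (x : H) :
    A x + adjoint B (B (A x)) = adjoint B x := by
  simpa using DFunLike.congr_fun hA x

lemma norm_sq_add_norm_sq_eq_inner (hA : (1 + adjoint B ∘L B) ∘L A = adjoint B) (g : H) :
    ‖A g‖ ^ 2 + ‖B (A g)‖ ^ 2 = ⟪g, B (A g)⟫ := by
  have := congrArg (⟪·, A g⟫) (apply_add_adjoint_apply hA g)
  simpa only [inner_add_left, adjoint_inner_left, real_inner_self_eq_norm_sq] using this

lemma norm_sq_add_norm_sq_le_mul (hA : (1 + adjoint B ∘L B) ∘L A = adjoint B)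
    (hP_sa : adjoint P = P) (hPB : P ∘L B = 0) (g : H) :
    ‖A g‖ ^ 2 + ‖B (A g)‖ ^ 2 ≤ ‖g - P g‖ * ‖B (A g)‖ := by
  have hPBA : P (B (A g)) = 0 := DFunLike.congr_fun hPB (A g)
  calc ‖A g‖ ^ 2 + ‖B (A g)‖ ^ 2 = ⟪g - P g, B (A g)⟫ := by
        rw [norm_sq_add_norm_sq_eq_inner hA, inner_sub_left, inner_proj_left hP_sa, hPBA,
          inner_zero_right, sub_zero]
    _ ≤ ‖g - P g‖ * ‖B (A g)‖ := real_inner_le_norm _ _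

lemma norm_apply_le_half (hA : (1 + adjoint B ∘L B) ∘L A = adjoint B)
    (hP_sa : adjoint P = P) (hPB : P ∘L B = 0) (g : H) : ‖A g‖ ≤ ‖g - P g‖ / 2 := by
  have := norm_sq_add_norm_sq_le_mul hA hP_sa hPB g
  nlinarith [norm_nonneg (A g), norm_nonneg (g - P g), sq_nonneg (‖B (A g)‖ - ‖g - P g‖ / 2)]

lemma inner_comp_apply_le (hA : (1 + adjoint B ∘L B) ∘L A = adjoint B)
    (hP_sa : adjoint P = P) (hPB : P ∘L B = 0) (g : H) : ⟪g, B (A g)⟫ ≤ ‖g - P g‖ ^ 2 := by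
  have hle := norm_sq_add_norm_sq_le_mul hA hP_sa hPB g
  have heq := norm_sq_add_norm_sq_eq_inner hA g
  nlinarith [norm_nonneg (B (A g)), norm_nonneg (g - P g), sq_nonneg ‖A g‖]

lemma abs_inner_apply_self_le (hA : (1 + adjoint B ∘L B) ∘L A = adjoint B)
    (hP_idem : P ∘L P = P) (hP_sa : adjoint P = P) (hPB : P ∘L B = 0) (g : H) :
    |⟪A g, g⟫| ≤ ‖g‖ ^ 2 / 2 := by
  have hA_le := (norm_apply_le_half hA hP_sa hPB g).trans
    (div_le_div_of_nonneg_right (norm_sub_proj_le hP_idem hP_sa g) zero_le_two)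
  calc |⟪A g, g⟫| ≤ ‖A g‖ * ‖g‖ := abs_real_inner_le_norm _ _
    _ ≤ ‖g‖ / 2 * ‖g‖ := by gcongr
    _ = ‖g‖ ^ 2 / 2 := by ring

lemma proj_apply_eq_self (hA : (1 + adjoint B ∘L B) ∘L A = adjoint B)
    (hP_idem : P ∘L P = P) (hP_sa : adjoint P = P) (hBP : B ∘L P = B) (x : H) :
    P (A x) = A x := by
  have hadj : adjoint (B ∘L P) = P ∘L adjoint B := by rw [adjoint_comp, hP_sa]
  rw [hBP] at hadj
  have hP_adj (y : H) : P (adjoint B y) = adjoint B y := by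
    rw [hadj, comp_apply, proj_apply_proj hP_idem]
  rw [eq_sub_of_add_eq (apply_add_adjoint_apply hA x), map_sub, hP_adj, hP_adj]

lemma inner_apply_eq_inner_proj (hA : (1 + adjoint B ∘L B) ∘L A = adjoint B)
    (hP_idem : P ∘L P = P) (hP_sa : adjoint P = P) (hBP : B ∘L P = B) (x g : H) :
    ⟪A x, g⟫ = ⟪A x, P g⟫ := by
  rw [← inner_proj_left hP_sa, proj_apply_eq_self hA hP_idem hP_sa hBP]

lemma one_add_mul_inner_le_norm_sq {lam : ℝ} {w v : H} (hlam : 0 ≤ lam)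
    (hw : w + adjoint B (B w) = v) (hB : lam * ‖w‖ ^ 2 ≤ ‖B w‖ ^ 2) :
    (1 + lam) * ⟪w, v⟫ ≤ ‖v‖ ^ 2 := by
  have hwv : ⟪w, v⟫ = ‖w‖ ^ 2 + ‖B w‖ ^ 2 := by
    rw [← hw, inner_add_right, adjoint_inner_right, real_inner_self_eq_norm_sq,
      real_inner_self_eq_norm_sq]
  have hcs := real_inner_le_norm w v
  nlinarith [sq_nonneg (‖v‖ - (1 + lam) * ‖w‖)]

lemma div_one_add_mul_norm_proj_sq_le_inner {lam : ℝ}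
    (hA : (1 + adjoint B ∘L B) ∘L A = adjoint B) (hP_idem : P ∘L P = P) (hP_sa : adjoint P = P)
    (hBP : B ∘L P = B) (hlam : 0 ≤ lam) (hcoer : ∀ f, lam * ‖P f‖ ^ 2 ≤ ‖B f‖ ^ 2) (g : H) :
    lam / (1 + lam) * ‖P g‖ ^ 2 ≤ ⟪A (B g), g⟫ := by
  set v := P g
  set w := v - A (B g) with hw_def
  have hBv : B v = B g := DFunLike.congr_fun hBP g
  have hw : w + adjoint B (B w) = v := by
    rw [hw_def, map_sub, map_sub, hBv, ← apply_add_adjoint_apply hA (B g)]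
    abel
  have hPw : P w = w := by
    rw [hw_def, map_sub, proj_apply_proj hP_idem, proj_apply_eq_self hA hP_idem hP_sa hBP]
  have hBw := hcoer w
  rw [hPw] at hBw
  have key := one_add_mul_inner_le_norm_sq hlam hw hBw
  have hinner : ⟪A (B g), g⟫ = ‖v‖ ^ 2 - ⟪w, v⟫ := by
    rw [inner_apply_eq_inner_proj hA hP_idem hP_sa hBP, hw_def, inner_sub_left,
      real_inner_self_eq_norm_sq, sub_sub_cancel]
  rw [hinner, div_mul_eq_mul_div, div_le_iff₀ (by positivity)]
  nlinarith

end AuxiliaryOperator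

section Dissipation

variable {L T P A : H →L[ℝ] H} {lam_m lam_M C_M : ℝ}

lemma inner_sub_apply_le (hT_skew : ∀ f g, ⟪T f, g⟫ = -⟪f, T g⟫)
    (hH1 : ∀ f : H, lam_m * ‖f - P f‖ ^ 2 ≤ -⟪L f, f⟫) (g : H) :
    ⟪(L - T) g, g⟫ ≤ -(lam_m * ‖g - P g‖ ^ 2) := by
  have hTg : ⟪T g, g⟫ = 0 := by
    have := hT_skew g g
    rw [real_inner_comm (T g) g] at this
    linarith
  rw [sub_apply, inner_sub_left, hTg]
  linarith [hH1 g]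

lemma comp_proj_comp_self (hP_idem : P ∘L P = P) : (T ∘L P) ∘L P = T ∘L P := by
  rw [comp_assoc, hP_idem]

variable [CompleteSpace H]

lemma inner_apply_sub_le (hL_sym : ∀ f g, ⟪L f, g⟫ = ⟪f, L g⟫)
    (hT_skew : ∀ f g, ⟪T f, g⟫ = -⟪f, T g⟫) (hP_ker : ∀ f, L (P f) = 0)
    (hA : (1 + adjoint (T ∘L P) ∘L (T ∘L P)) ∘L A = adjoint (T ∘L P))
    (hP_idem : P ∘L P = P) (hP_sa : adjoint P = P) (hH3 : P ∘L (T ∘L P) = 0) (g : H) :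
    ⟪A g, (L - T) g⟫ ≤ ‖g - P g‖ ^ 2 := by
  have hPA := proj_apply_eq_self hA hP_idem hP_sa (comp_proj_comp_self hP_idem) g
  have hL : ⟪A g, L g⟫ = 0 := by rw [← hL_sym, ← hPA, hP_ker, inner_zero_left]
  have hT : -⟪A g, T g⟫ = ⟪g, (T ∘L P) (A g)⟫ := by
    rw [comp_apply, hPA]
    linarith [hT_skew (A g) g, real_inner_comm (T (A g)) g]
  rw [sub_apply, inner_sub_right, hL, zero_sub, hT]
  exact inner_comp_apply_le hA hP_sa hH3 g

lemma inner_apply_sub_apply_le (hlM : 0 ≤ lam_M)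
    (hA : (1 + adjoint (T ∘L P) ∘L (T ∘L P)) ∘L A = adjoint (T ∘L P))
    (hP_idem : P ∘L P = P) (hP_sa : adjoint P = P)
    (hH2 : ∀ f : H, lam_M * ‖P f‖ ^ 2 ≤ ‖T (P f)‖ ^ 2)
    (hH4 : ∀ f : H, ‖A (T (f - P f))‖ + ‖A (L f)‖ ≤ C_M * ‖f - P f‖) (g : H) :
    ⟪A ((L - T) g), g⟫ ≤ C_M * ‖g - P g‖ * ‖P g‖ - lam_M / (1 + lam_M) * ‖P g‖ ^ 2 := by
  have hBP := comp_proj_comp_self (T := T) hP_idem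
  have hsplit : (L - T) g = (L g - T (g - P g)) - (T ∘L P) g := by
    rw [sub_apply, comp_apply, map_sub]
    abel
  have hcross : ⟪A (L g - T (g - P g)), g⟫ ≤ C_M * ‖g - P g‖ * ‖P g‖ :=
    calc ⟪A (L g - T (g - P g)), g⟫ = ⟪A (L g) - A (T (g - P g)), P g⟫ := by
          rw [inner_apply_eq_inner_proj hA hP_idem hP_sa hBP, map_sub]
      _ ≤ ‖A (L g) - A (T (g - P g))‖ * ‖P g‖ := real_inner_le_norm _ _
      _ ≤ (‖A (T (g - P g))‖ + ‖A (L g)‖) * ‖P g‖ := by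
          gcongr
          rw [add_comm]
          exact norm_sub_le _ _
      _ ≤ C_M * ‖g - P g‖ * ‖P g‖ := by gcongr; exact hH4 g
  have hmacro := div_one_add_mul_norm_proj_sq_le_inner hA hP_idem hP_sa hBP hlM hH2 g
  rw [hsplit, map_sub, inner_sub_left]
  linarith

lemma dissipation_le {k ε : ℝ} (hL_sym : ∀ f g, ⟪L f, g⟫ = ⟪f, L g⟫)
    (hT_skew : ∀ f g, ⟪T f, g⟫ = -⟪f, T g⟫) (hP_idem : P ∘L P = P) (hP_sa : adjoint P = P)
    (hP_ker : ∀ f, L (P f) = 0) (hH1 : ∀ f : H, lam_m * ‖f - P f‖ ^ 2 ≤ -⟪L f, f⟫)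
    (hH2 : ∀ f : H, lam_M * ‖P f‖ ^ 2 ≤ ‖T (P f)‖ ^ 2) (hH3 : P ∘L (T ∘L P) = 0)
    (hA : (1 + adjoint (T ∘L P) ∘L (T ∘L P)) ∘L A = adjoint (T ∘L P))
    (hH4 : ∀ f : H, ‖A (T (f - P f))‖ + ‖A (L f)‖ ≤ C_M * ‖f - P f‖)
    (hlM : 0 ≤ lam_M) (hk : 0 < k) (hk_le : k ≤ lam_M / (1 + lam_M)) (hε0 : 0 ≤ ε)
    (hε : ε * (2 * k + k ^ 2 + C_M ^ 2) ≤ 2 * k * lam_m) (g : H) :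
    ⟪(L - T) g, g⟫ + ε * (⟪A ((L - T) g), g⟫ + ⟪A g, (L - T) g⟫) ≤ -(ε * k / 2) * ‖g‖ ^ 2 := by
  have hmicro := inner_sub_apply_le hT_skew hH1 g
  have hA_left : ⟪A ((L - T) g), g⟫ ≤ C_M * ‖g - P g‖ * ‖P g‖ - k * ‖P g‖ ^ 2 :=
    (inner_apply_sub_apply_le hlM hA hP_idem hP_sa hH2 hH4 g).trans
      (sub_le_sub_left (mul_le_mul_of_nonneg_right hk_le (sq_nonneg _)) _)
  have hA_right := inner_apply_sub_le hL_sym hT_skew hP_ker hA hP_idem hP_sa hH3 g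
  have hε_mul := mul_le_mul_of_nonneg_left (add_le_add hA_left hA_right) hε0
  rw [norm_sq_eq_norm_sub_proj_sq_add hP_idem hP_sa g]
  linarith [quadratic_le (X := ‖g - P g‖) (Y := ‖P g‖) hk hε0 hε]

end Dissipation

end Hypocoercivity

open Hypocoercivity in
theorem stmt_3_general {H : Type*} [NormedAddCommGroup H] [InnerProductSpace ℝ H] [CompleteSpace H]
    (L T P A : H →L[ℝ] H) (lam_m lam_M C_M : ℝ)
    (hlm : 0 < lam_m) (hlM : 0 < lam_M)
    (hL_sym : ∀ f g, ⟪L f, g⟫ = ⟪f, L g⟫)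
    (hT_skew : ∀ f g, ⟪T f, g⟫ = -⟪f, T g⟫)
    (hP_idem : P ∘L P = P)
    (hP_sa : ContinuousLinearMap.adjoint P = P)
    (hP_ker : ∀ f, L (P f) = 0)
    (hH1 : ∀ f : H, lam_m * ‖f - P f‖ ^ 2 ≤ -⟪L f, f⟫)
    (hH2 : ∀ f : H, lam_M * ‖P f‖ ^ 2 ≤ ‖T (P f)‖ ^ 2)
    (hH3 : P ∘L (T ∘L P) = 0)
    (hA : (1 + (ContinuousLinearMap.adjoint (T ∘L P)) ∘L (T ∘L P)) ∘L A
        = ContinuousLinearMap.adjoint (T ∘L P))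
    (hH4 : ∀ f : H, ‖A (T (f - P f))‖ + ‖A (L f)‖ ≤ C_M * ‖f - P f‖) :
    ∃ lam > (0:ℝ), ∃ C ≥ (1:ℝ), ∀ f : ℝ → H,
      (∀ t : ℝ, HasDerivAt f ((L - T) (f t)) t) →
      ∀ t ≥ (0:ℝ), ‖f t‖ ≤ C * Real.exp (-lam * t) * ‖f 0‖ := by
  set k := lam_M / (1 + lam_M)
  have hk : 0 < k := by positivity
  obtain ⟨ε, hε0, hε_half, hε⟩ :=
    exists_pos_le_half_mul_le (a := 2 * k * lam_m) (b := 2 * k + k ^ 2 + C_M ^ 2)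
      (by positivity) (by positivity)
  have hAg := abs_inner_apply_self_le hA hP_idem hP_sa hH3
  have hdiss (g : H) :
      ⟪(L - T) g, g⟫ + ε * (⟪A ((L - T) g), g⟫ + ⟪A g, (L - T) g⟫)
        ≤ -(ε * k / 2) * modifiedEntropy A ε g := by
    refine (dissipation_le hL_sym hT_skew hP_idem hP_sa hP_ker hH1 hH2 hH3 hA hH4 hlM.le hk
      le_rfl hε0.le hε g).trans ?_
    have := modifiedEntropy_le (hAg g) hε0.le hε_half
    have : 0 ≤ ε * k / 2 := by positivity
    nlinarith [sq_nonneg ‖g‖]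
  refine ⟨ε * k / 2 / 2, by positivity, 2, by norm_num, fun f hf t ht => ?_⟩
  have hdecay := le_exp_mul_of_hasDerivAt_le (fun s => hasDerivAt_modifiedEntropy (hf s))
    (fun s => hdiss (f s)) ht
  refine le_two_mul_exp_of_sq_le (norm_nonneg _) (norm_nonneg _) ?_
  calc ‖f t‖ ^ 2 / 4 ≤ modifiedEntropy A ε (f t) := le_modifiedEntropy (hAg _) hε0.le hε_half
    _ ≤ exp (-(ε * k / 2) * t) * modifiedEntropy A ε (f 0) := hdecay
    _ ≤ exp (-(ε * k / 2) * t) * (3 / 4 * ‖f 0‖ ^ 2) := by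
        gcongr
        exact modifiedEntropy_le (hAg _) hε0.le hε_half

/-- Theorem 2 (abstract hypocoercivity): under microscopic coercivity (H1), macroscopic
coercivity (H2), `P T P = 0` (H3) and boundedness of the auxiliary operators (H4), there are
explicit constants `lam > 0` and `C ≥ 1`, depending only on `lam_m, lam_M, C_M`, such that any
solution of `f' = (L - T) f` satisfies `‖f t‖ ≤ C e^{-lam t} ‖f 0‖` for all `t ≥ 0`. -/
theorem stmt_3 {H : Type*} [NormedAddCommGroup H] [InnerProductSpace ℝ H] [CompleteSpace H]
    (L T P A : H →L[ℝ] H) (lam_m lam_M C_M : ℝ)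
    (hlm : 0 < lam_m) (hlM : 0 < lam_M) (hCM : 0 < C_M)
    (hL_sym : ∀ f g, ⟪L f, g⟫ = ⟪f, L g⟫)
    (hT_skew : ∀ f g, ⟪T f, g⟫ = -⟪f, T g⟫)
    (hP_idem : P ∘L P = P)
    (hP_sa : ContinuousLinearMap.adjoint P = P)
    (hP_ker : ∀ f, L (P f) = 0)
    (hP_ker' : ∀ f, L f = 0 → P f = f)
    (hH1 : ∀ f : H, lam_m * ‖f - P f‖ ^ 2 ≤ -⟪L f, f⟫)
    (hH2 : ∀ f : H, lam_M * ‖P f‖ ^ 2 ≤ ‖T (P f)‖ ^ 2)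
    (hH3 : P ∘L (T ∘L P) = 0)
    (hA : (1 + (ContinuousLinearMap.adjoint (T ∘L P)) ∘L (T ∘L P)) ∘L A
        = ContinuousLinearMap.adjoint (T ∘L P))
    (hH4 : ∀ f : H, ‖A (T (f - P f))‖ + ‖A (L f)‖ ≤ C_M * ‖f - P f‖) :
    ∃ lam > (0:ℝ), ∃ C ≥ (1:ℝ), ∀ f : ℝ → H,
      (∀ t : ℝ, HasDerivAt f ((L - T) (f t)) t) →
      ∀ t ≥ (0:ℝ), ‖f t‖ ≤ C * Real.exp (-lam * t) * ‖f 0‖ :=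
  stmt_3_general L T P A lam_m lam_M C_M hlm hlM hL_sym hT_skew hP_idem hP_sa hP_ker hH1 hH2 hH3 hA
    hH4
end

section
/- Let U_k(t) = (u_k(t), v_k(t)) solve dU_k/dt = (L − T_k)U_k with T_k = [[0,−k],[k,0]], L = [[0,0],[0,−1]], k ≠ 0, and let H_k(t) := (1/2)|U_k(t)|² + ε·(k/(1+k²))·u_k v_k. Then dH_k/dt = −ε(k²/(1+k²))u_k² − (1 − ε k²/(1+k²))v_k² − ε(k/(1+k²))u_k v_k, and for any λ ∈ (0,1) and ε ∈ (0, 8λ²/(8λ²+1)), setting κ := min{(ε/2)(1−λ²), 1−ε−ε/(8λ²)} > 0, one has dH_k/dt ≤ −κ|U_k|², hence |U_k(t)| ≤ √((1+ε)/(1−ε)) e^{−κt/(1+ε)} |U_k(0)| for all t ≥ 0. -/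
/-!
With `a = k/(1+k²)` and `b = k²/(1+k²)` one has `|a| ≤ 1/2` and, since `k² ≥ 1`, `1/2 ≤ b ≤ 1`.
The cross term `ε a uv` of `H_k` is therefore at most `(ε/2)|U|²` in absolute value, so `H_k` is
equivalent to `|U|²/2` with constants `(1 ∓ ε)/2`. Along the flow the cross term produces the
missing dissipation `-ε b u²` in `u`; Young's inequality `|uv| ≤ λ²u² + v²/(4λ²)` controls the
remaining mixed term, giving `H_k' ≤ -κ|U|² ≤ -(2κ/(1+ε)) H_k`. Grönwall and the equivalence of
`H_k` with `|U|²/2` then give the decay of `|U_k|`.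
-/

open Real

theorem abs_div_one_add_sq_le_half (x : ℝ) : |x / (1 + x ^ 2)| ≤ 1 / 2 := by
  have hpos : 0 < 1 + x ^ 2 := by positivity
  rw [abs_div, abs_of_pos hpos, div_le_iff₀ hpos]
  nlinarith [two_mul_le_add_sq |x| 1, sq_abs x]

theorem sq_div_one_add_sq_le_one (x : ℝ) : x ^ 2 / (1 + x ^ 2) ≤ 1 :=
  (div_le_one (by positivity)).mpr (by linarith)

theorem half_le_sq_div_one_add_sq {x : ℝ} (hx : 1 ≤ x ^ 2) : 1 / 2 ≤ x ^ 2 / (1 + x ^ 2) := by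
  rw [le_div_iff₀ (by positivity)]
  linarith

theorem abs_mul_le_young {lam : ℝ} (hlam : lam ≠ 0) (x y : ℝ) :
    |x * y| ≤ lam ^ 2 * x ^ 2 + y ^ 2 / (4 * lam ^ 2) := by
  have h := two_mul_le_add_sq (lam * |x|) (|y| / (2 * lam))
  have hxy : 2 * (lam * |x|) * (|y| / (2 * lam)) = |x * y| := by
    rw [abs_mul]; field_simp
  have hy : (|y| / (2 * lam)) ^ 2 = y ^ 2 / (4 * lam ^ 2) := by
    rw [div_pow, sq_abs]; ring
  rw [hxy, hy, mul_pow, sq_abs] at h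
  exact h

theorem abs_mul_mul_le_of_abs_le_half {a : ℝ} (ha : |a| ≤ 1 / 2) (x y : ℝ) :
    |a * x * y| ≤ (x ^ 2 + y ^ 2) / 4 := by
  have hxy : 2 * |x| * |y| ≤ x ^ 2 + y ^ 2 := by
    simpa only [sq_abs] using two_mul_le_add_sq |x| |y|
  rw [abs_mul, abs_mul, mul_assoc]
  nlinarith [abs_nonneg a, mul_nonneg (abs_nonneg x) (abs_nonneg y)]

theorem modified_energy_mem_Icc {ε a : ℝ} (hε : 0 ≤ ε) (ha : |a| ≤ 1 / 2) (x y : ℝ) :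
    1 / 2 * (x ^ 2 + y ^ 2) + ε * a * x * y ∈
      Set.Icc ((1 - ε) / 2 * (x ^ 2 + y ^ 2)) ((1 + ε) / 2 * (x ^ 2 + y ^ 2)) := by
  obtain ⟨hlo, hhi⟩ := abs_le.mp (abs_mul_mul_le_of_abs_le_half ha x y)
  have hN : 0 ≤ x ^ 2 + y ^ 2 := by positivity
  constructor <;> nlinarith [mul_le_mul_of_nonneg_left hhi hε, mul_le_mul_of_nonneg_left hlo hε]

theorem hypocoercivity_rate_pos {ε lam : ℝ} (hlam : lam ∈ Set.Ioo (0 : ℝ) 1)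
    (hε : ε ∈ Set.Ioo (0 : ℝ) (8 * lam ^ 2 / (8 * lam ^ 2 + 1))) :
    0 < min ((ε / 2) * (1 - lam ^ 2)) (1 - ε - ε / (8 * lam ^ 2)) := by
  obtain ⟨hlam0, hlam1⟩ := hlam
  obtain ⟨hε0, hε1⟩ := hε
  have h8 : 0 < 8 * lam ^ 2 := by positivity
  rw [lt_div_iff₀ (by positivity)] at hε1
  refine lt_min (mul_pos (by positivity) (by nlinarith)) ?_
  have : ε / (8 * lam ^ 2) < 1 - ε := by rw [div_lt_iff₀ h8]; nlinarith
  linarith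

theorem modified_energy_dissipation_le {ε lam κ a b : ℝ} (hε : 0 ≤ ε) (hlam : lam ≠ 0)
    (ha : |a| ≤ 1 / 2) (hb : 1 / 2 ≤ b) (hb' : b ≤ 1) (hκ₁ : κ ≤ (ε / 2) * (1 - lam ^ 2))
    (hκ₂ : κ ≤ 1 - ε - ε / (8 * lam ^ 2)) (x y : ℝ) :
    -ε * b * x ^ 2 - (1 - ε * b) * y ^ 2 - ε * a * x * y ≤ -κ * (x ^ 2 + y ^ 2) := by
  have hcross : -(lam ^ 2 * x ^ 2 + y ^ 2 / (4 * lam ^ 2)) / 2 ≤ a * x * y := by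
    have h1 := abs_mul_le_young hlam x y
    have h2 : |a * x * y| ≤ |x * y| / 2 := by
      rw [mul_assoc, abs_mul]; nlinarith [abs_nonneg (x * y)]
    linarith [neg_abs_le (a * x * y)]
  have hy : ε / (8 * lam ^ 2) * y ^ 2 = ε / 2 * (y ^ 2 / (4 * lam ^ 2)) := by
    field_simp; ring
  nlinarith [mul_le_mul_of_nonneg_left hcross hε, mul_le_mul_of_nonneg_left hb (sq_nonneg x),
    mul_le_mul_of_nonneg_left hb' (mul_nonneg hε (sq_nonneg y)),
    mul_le_mul_of_nonneg_right hκ₁ (sq_nonneg x), mul_le_mul_of_nonneg_right hκ₂ (sq_nonneg y)]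

theorem hasDerivAt_modified_energy {k ε : ℝ} {u v : ℝ → ℝ}
    (hu : ∀ t, HasDerivAt u (k * v t) t) (hv : ∀ t, HasDerivAt v (-k * u t - v t) t) (t : ℝ) :
    HasDerivAt (fun s => (1 / 2) * (u s ^ 2 + v s ^ 2) + ε * (k / (1 + k ^ 2)) * u s * v s)
      (-ε * (k ^ 2 / (1 + k ^ 2)) * u t ^ 2 - (1 - ε * (k ^ 2 / (1 + k ^ 2))) * v t ^ 2
        - ε * (k / (1 + k ^ 2)) * u t * v t) t := by
  refine ((((hu t).pow 2).add ((hv t).pow 2)).const_mul (1 / 2 : ℝ)).add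
    (((hu t).const_mul (ε * (k / (1 + k ^ 2)))).mul (hv t)) |>.congr_deriv ?_
  simp only [Nat.cast_ofNat, Nat.add_one_sub_one, pow_one]
  ring

theorem le_mul_exp_of_hasDerivAt_le {H H' : ℝ → ℝ} {c : ℝ} (hH : ∀ t, HasDerivAt H (H' t) t)
    (hle : ∀ t, H' t ≤ -c * H t) {t : ℝ} (ht : 0 ≤ t) : H t ≤ H 0 * exp (-c * t) := by
  have h := le_gronwallBound_of_liminf_deriv_right_le (ε := 0)
    (fun s _ => (hH s).continuousAt.continuousWithinAt)
    (fun s _ _ hr => (hH s).hasDerivWithinAt.liminf_right_slope_le hr) le_rfl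
    (fun s _ => (hle s).trans_eq (add_zero _).symm) t ⟨ht, le_rfl⟩
  rwa [gronwallBound_ε0, sub_zero] at h

theorem le_mul_exp_of_lyapunov {H H' N : ℝ → ℝ} {m M κ : ℝ} (hm : 0 < m) (hM : 0 < M)
    (hκ : 0 ≤ κ) (hH : ∀ t, HasDerivAt H (H' t) t) (hdiss : ∀ t, H' t ≤ -κ * N t)
    (hlow : ∀ t, m * N t ≤ H t) (hup : ∀ t, H t ≤ M * N t) {t : ℝ} (ht : 0 ≤ t) :
    N t ≤ M / m * exp (-(κ / M) * t) * N 0 := by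
  have hrate : ∀ s, H' s ≤ -(κ / M) * H s := fun s => by
    have := mul_le_mul_of_nonneg_left (hup s) (div_nonneg hκ hM.le)
    rw [← mul_assoc, div_mul_cancel₀ _ hM.ne'] at this
    linarith [hdiss s]
  have hdecay := le_mul_exp_of_hasDerivAt_le hH hrate ht
  have hexp := exp_pos (-(κ / M) * t)
  rw [div_mul_eq_mul_div, div_mul_eq_mul_div, le_div_iff₀ hm]
  nlinarith [hlow t, hup 0]

/-- Hypocoercivity for the toy model mode `k ≠ 0`: with `H_k = ½(u²+v²) + ε k/(1+k²) uv`,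
the derivative formula holds, `dH_k/dt ≤ -κ |U_k|²` with
`κ = min{(ε/2)(1-λ²), 1-ε-ε/(8λ²)} > 0` for `λ ∈ (0,1)`, `ε ∈ (0, 8λ²/(8λ²+1))`, and hence
`|U_k(t)| ≤ √((1+ε)/(1-ε)) e^{-κ t/(1+ε)} |U_k(0)|` for `t ≥ 0`. -/
theorem stmt_7 (k : ℤ) (hk : k ≠ 0) (ε lam : ℝ)
    (hlam : lam ∈ Set.Ioo (0:ℝ) 1)
    (hε : ε ∈ Set.Ioo (0:ℝ) (8 * lam ^ 2 / (8 * lam ^ 2 + 1)))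
    (u v : ℝ → ℝ)
    (hu : ∀ t : ℝ, HasDerivAt u ((k : ℝ) * v t) t)
    (hv : ∀ t : ℝ, HasDerivAt v (-(k : ℝ) * u t - v t) t) :
    0 < min ((ε / 2) * (1 - lam ^ 2)) (1 - ε - ε / (8 * lam ^ 2)) ∧
    (∀ t : ℝ, HasDerivAt
      (fun s => (1/2) * ((u s) ^ 2 + (v s) ^ 2)
        + ε * ((k : ℝ) / (1 + (k : ℝ) ^ 2)) * u s * v s)
      (-ε * ((k : ℝ) ^ 2 / (1 + (k : ℝ) ^ 2)) * (u t) ^ 2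
        - (1 - ε * ((k : ℝ) ^ 2 / (1 + (k : ℝ) ^ 2))) * (v t) ^ 2
        - ε * ((k : ℝ) / (1 + (k : ℝ) ^ 2)) * u t * v t) t) ∧
    (∀ t : ℝ,
      -ε * ((k : ℝ) ^ 2 / (1 + (k : ℝ) ^ 2)) * (u t) ^ 2
        - (1 - ε * ((k : ℝ) ^ 2 / (1 + (k : ℝ) ^ 2))) * (v t) ^ 2
        - ε * ((k : ℝ) / (1 + (k : ℝ) ^ 2)) * u t * v t
      ≤ -(min ((ε / 2) * (1 - lam ^ 2)) (1 - ε - ε / (8 * lam ^ 2)))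
          * ((u t) ^ 2 + (v t) ^ 2)) ∧
    (∀ t ≥ (0:ℝ), Real.sqrt ((u t) ^ 2 + (v t) ^ 2) ≤
      Real.sqrt ((1 + ε) / (1 - ε))
        * Real.exp (-(min ((ε / 2) * (1 - lam ^ 2)) (1 - ε - ε / (8 * lam ^ 2))) * t / (1 + ε))
        * Real.sqrt ((u 0) ^ 2 + (v 0) ^ 2)) := by
  set κ := min ((ε / 2) * (1 - lam ^ 2)) (1 - ε - ε / (8 * lam ^ 2))
  have hκ : 0 < κ := hypocoercivity_rate_pos hlam hε
  have hε0 : 0 ≤ ε := hε.1.le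
  have hε1 : ε < 1 := hε.2.trans ((div_lt_one (by positivity)).mpr (by linarith))
  have ha := abs_div_one_add_sq_le_half (k : ℝ)
  have hk2 : (1 : ℝ) ≤ (k : ℝ) ^ 2 :=
    mod_cast (one_le_sq_iff_one_le_abs _).mpr (Int.one_le_abs hk)
  have hdiss := modified_energy_dissipation_le hε0 hlam.1.ne' ha
    (half_le_sq_div_one_add_sq hk2) (sq_div_one_add_sq_le_one _) (min_le_left _ _)
    (min_le_right _ _)
  refine ⟨hκ, hasDerivAt_modified_energy hu hv, fun t => hdiss (u t) (v t), fun t ht => ?_⟩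
  have hH := fun s => modified_energy_mem_Icc hε0 ha (u s) (v s)
  have hsq := le_mul_exp_of_lyapunov (N := fun s => u s ^ 2 + v s ^ 2) (by linarith)
    (by linarith) hκ.le (hasDerivAt_modified_energy hu hv) (fun s => hdiss (u s) (v s))
    (fun s => (hH s).1) (fun s => (hH s).2) ht
  have hrate : exp (-(κ / ((1 + ε) / 2)) * t) = exp (-κ * t / (1 + ε)) ^ 2 := by
    rw [sq, ← exp_add]; congr 1; field_simp; ring
  have hratio : (1 + ε) / 2 / ((1 - ε) / 2) = (1 + ε) / (1 - ε) := by field_simp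
  rw [hrate, hratio] at hsq
  calc √(u t ^ 2 + v t ^ 2)
      ≤ √((1 + ε) / (1 - ε) * exp (-κ * t / (1 + ε)) ^ 2 * (u 0 ^ 2 + v 0 ^ 2)) :=
        sqrt_le_sqrt hsq
    _ = _ := by
      rw [sqrt_mul (by positivity), sqrt_mul (div_nonneg (by linarith) (by linarith)),
        sqrt_sq (exp_pos _).le]
end

section
/- Let w₀, w₁ be positive smooth weight functions on ℝ^d with ρ_F = w₀². Assume the weighted Poincaré inequality ‖∇u‖₁² ≥ λ_M ‖u‖₀² for all u with ∫ u w₀² dx = 0 (where ‖v‖_i² := ∫ v² w_i² dx), and assume there exist c₁ > 0 and c₂ ∈ [0,1) such that −w₁² Δ(log w₁) ≤ c₁ w₀² + c₂|∇w₁|². Then with κ := λ_M(1−c₂)/(λ_M + c₁) > 0, every u with ∫ u w₀² dx = 0 satisfies ∫ |∇u|² w₁² dx ≥ κ ∫ u² |∇w₁|² dx. -/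
open MeasureTheory

/-- The Laplacian of a scalar function on Euclidean space, as the trace of the Hessian. -/
noncomputable def lap {d : ℕ} (f : EuclideanSpace ℝ (Fin d) → ℝ)
    (x : EuclideanSpace ℝ (Fin d)) : ℝ :=
  ∑ i : Fin d,
    fderiv ℝ (fun y => fderiv ℝ f y (EuclideanSpace.single i 1)) x (EuclideanSpace.single i 1)

/- Auxiliary lemmas -/

lemma norm_sq_dual {d : ℕ} (L : EuclideanSpace ℝ (Fin d) →L[ℝ] ℝ) :
    ‖L‖ ^ 2 = ∑ i, (L (EuclideanSpace.single i 1)) ^ 2 := by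
  set v := (InnerProductSpace.toDual ℝ (EuclideanSpace ℝ (Fin d))).symm L with hv
  have hvi : ∀ i, v i = L (EuclideanSpace.single i 1) := by
    intro i
    have := InnerProductSpace.toDual_symm_apply (𝕜 := ℝ)
      (E := EuclideanSpace ℝ (Fin d)) (y := L) (x := EuclideanSpace.single i 1)
    rw [← this, EuclideanSpace.inner_single_right]
    simp [hv]
  have hnorm : ‖L‖ = ‖v‖ := by
    rw [hv, LinearIsometryEquiv.norm_map]
  rw [hnorm, EuclideanSpace.norm_eq, Real.sq_sqrt (by positivity)]
  exact Finset.sum_congr rfl fun i _ => by rw [← hvi i]; simp [sq]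

lemma cont_fderiv_apply {d : ℕ} {f : EuclideanSpace ℝ (Fin d) → ℝ}
    (hf : ContDiff ℝ (⊤ : ℕ∞) f) (v : EuclideanSpace ℝ (Fin d)) :
    Continuous fun x => fderiv ℝ f x v :=
  (ContinuousLinearMap.apply ℝ ℝ v).continuous.comp (hf.continuous_fderiv (by simp))

lemma contdiff_fderiv_apply {d : ℕ} {f : EuclideanSpace ℝ (Fin d) → ℝ}
    (hf : ContDiff ℝ (⊤ : ℕ∞) f) (v : EuclideanSpace ℝ (Fin d)) :
    ContDiff ℝ (⊤ : ℕ∞) fun x => fderiv ℝ f x v :=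
  (ContinuousLinearMap.apply ℝ ℝ v).contDiff.comp (hf.fderiv_right (by simp))

lemma hcs_aux {E : Type*} [TopologicalSpace E] {β : Type*} [Zero β] {γ : Type*} [Zero γ]
    {f : E → β} {g : E → γ} (h : HasCompactSupport f) (hg : ∀ x, f x = 0 → g x = 0) :
    HasCompactSupport g :=
  h.mono' (subset_trans (fun x hx h0 => hx (hg x h0)) subset_closure)

lemma integral_fderiv_eq_zero' {d : ℕ} {f : EuclideanSpace ℝ (Fin d) → ℝ}
    (hf : ContDiff ℝ (⊤ : ℕ∞) f) (hsupp : HasCompactSupport f) (v : EuclideanSpace ℝ (Fin d)) :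
    ∫ x, fderiv ℝ f x v = 0 := by
  have key := integral_mul_fderiv_eq_neg_fderiv_mul_of_integrable
    (𝕜 := ℝ) (μ := (volume : Measure (EuclideanSpace ℝ (Fin d))))
    (f := f) (g := fun _ => (1:ℝ)) (v := v)
    ?_ ?_ ?_ (fun x _ => hf.differentiable (by simp) x) (fun x _ => differentiable_const 1 x)
  · simp only [fderiv_const, fderiv_fun_const, ContinuousLinearMap.zero_apply, mul_zero, mul_one,
      integral_zero, Pi.zero_apply] at key
    have := key.symm
    rw [neg_eq_zero] at this
    exact this
  · simp only [mul_one]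
    exact (cont_fderiv_apply hf v).integrable_of_hasCompactSupport (hsupp.fderiv_apply ℝ v)
  · simp only [fderiv_const, fderiv_fun_const, Pi.zero_apply, ContinuousLinearMap.zero_apply, mul_zero]
    exact integrable_zero _ _ _
  · simp only [mul_one]
    exact (hf.continuous).integrable_of_hasCompactSupport hsupp

lemma lap_log_identity {d : ℕ} {w₁ : EuclideanSpace ℝ (Fin d) → ℝ}
    (hpos : ∀ x, 0 < w₁ x) (hsm : ContDiff ℝ (⊤ : ℕ∞) w₁) (x : EuclideanSpace ℝ (Fin d)) :
    (w₁ x) ^ 2 * lap (fun y => Real.log (w₁ y)) x =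
      w₁ x * (∑ i : Fin d, fderiv ℝ (fun y => fderiv ℝ w₁ y (EuclideanSpace.single i 1)) x
          (EuclideanSpace.single i 1))
      - ∑ i : Fin d, (fderiv ℝ w₁ x (EuclideanSpace.single i 1)) ^ 2 := by
  have hdiff : Differentiable ℝ w₁ := hsm.differentiable (by simp)
  have hφ : ∀ y, fderiv ℝ (fun z => Real.log (w₁ z)) y = (w₁ y)⁻¹ • fderiv ℝ w₁ y := by
    intro y
    exact ((Real.hasDerivAt_log (ne_of_gt (hpos y))).comp_hasFDerivAt y
      (hdiff y).hasFDerivAt).fderiv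
  have key : ∀ i : Fin d,
      (w₁ x) ^ 2 * fderiv ℝ (fun y => fderiv ℝ (fun z => Real.log (w₁ z)) y
          (EuclideanSpace.single i 1)) x (EuclideanSpace.single i 1)
      = w₁ x * fderiv ℝ (fun y => fderiv ℝ w₁ y (EuclideanSpace.single i 1)) x
          (EuclideanSpace.single i 1)
        - (fderiv ℝ w₁ x (EuclideanSpace.single i 1)) ^ 2 := by
    intro i
    set e := EuclideanSpace.single (𝕜 := ℝ) i (1:ℝ)
    have heq : (fun y => fderiv ℝ (fun z => Real.log (w₁ z)) y e)
        = fun y => (w₁ y)⁻¹ * fderiv ℝ w₁ y e := by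
      funext y; rw [hφ y]; simp
    rw [heq]
    have hinv : ∀ y, DifferentiableAt ℝ (fun z => (w₁ z)⁻¹) y :=
      fun y => (hdiff y).inv (ne_of_gt (hpos y))
    have hP : DifferentiableAt ℝ (fun y => fderiv ℝ w₁ y e) x :=
      ((contdiff_fderiv_apply hsm e).differentiable (by simp)) x
    rw [fderiv_fun_mul (hinv x) hP]
    have hinv' : fderiv ℝ (fun z => (w₁ z)⁻¹) x = -((w₁ x) ^ 2)⁻¹ • fderiv ℝ w₁ x := by
      exact ((hasDerivAt_inv (ne_of_gt (hpos x))).comp_hasFDerivAt x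
        (hdiff x).hasFDerivAt).fderiv
    simp only [ContinuousLinearMap.add_apply, ContinuousLinearMap.smul_apply, hinv',
      smul_eq_mul, neg_mul]
    have h0 : w₁ x ≠ 0 := ne_of_gt (hpos x)
    field_simp
    ring
  unfold lap
  rw [Finset.mul_sum]
  rw [Finset.sum_congr rfl fun i _ => key i]
  rw [Finset.sum_sub_distrib, Finset.mul_sum]

lemma expand_deriv {d : ℕ} {u w₁ : EuclideanSpace ℝ (Fin d) → ℝ}
    (hu : ContDiff ℝ (⊤ : ℕ∞) u) (hw : ContDiff ℝ (⊤ : ℕ∞) w₁) (i : Fin d) (x : EuclideanSpace ℝ (Fin d)) :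
    fderiv ℝ (fun y => u y ^ 2 * (w₁ y * fderiv ℝ w₁ y (EuclideanSpace.single i 1))) x
        (EuclideanSpace.single i 1) =
      2 * u x * fderiv ℝ u x (EuclideanSpace.single i 1) * w₁ x
          * fderiv ℝ w₁ x (EuclideanSpace.single i 1)
        + u x ^ 2 * (fderiv ℝ w₁ x (EuclideanSpace.single i 1)) ^ 2
        + u x ^ 2 * w₁ x *
          fderiv ℝ (fun y => fderiv ℝ w₁ y (EuclideanSpace.single i 1)) x
            (EuclideanSpace.single i 1) := by
  set e := EuclideanSpace.single (𝕜 := ℝ) i (1:ℝ)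
  have hux : DifferentiableAt ℝ u x := (hu.differentiable (by simp)) x
  have hwx : DifferentiableAt ℝ w₁ x := (hw.differentiable (by simp)) x
  have hPx : DifferentiableAt ℝ (fun y => fderiv ℝ w₁ y e) x :=
    ((contdiff_fderiv_apply hw e).differentiable (by simp)) x
  have hu2 : DifferentiableAt ℝ (fun y => u y ^ 2) x := by
    simpa [sq] using hux.fun_mul hux
  have hwP : DifferentiableAt ℝ (fun y => w₁ y * fderiv ℝ w₁ y e) x := hwx.fun_mul hPx
  have hu2' : fderiv ℝ (fun y => u y ^ 2) x e = 2 * u x * fderiv ℝ u x e := by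
    have : (fun y => u y ^ 2) = fun y => u y * u y := by funext y; ring
    rw [this, fderiv_fun_mul hux hux]
    simp; ring
  rw [fderiv_fun_mul hu2 hwP, fderiv_fun_mul hwx hPx]
  simp only [ContinuousLinearMap.add_apply, ContinuousLinearMap.smul_apply, smul_eq_mul, hu2']
  ring

/-- Lemma 6 (improved Poincaré inequality): if the weighted Poincaré inequality
`‖∇u‖₁² ≥ λ_M ‖u‖₀²` holds for mean-zero `u`, and `-w₁² Δ(log w₁) ≤ c₁ w₀² + c₂ |∇w₁|²`
with `c₁ > 0`, `c₂ ∈ [0,1)`, then with `κ = λ_M(1-c₂)/(λ_M+c₁)` every mean-zero `u`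
satisfies `∫ |∇u|² w₁² ≥ κ ∫ u² |∇w₁|²`. -/
theorem stmt_10 (d : ℕ) (w₀ w₁ : EuclideanSpace ℝ (Fin d) → ℝ)
    (hw₀pos : ∀ x, 0 < w₀ x) (hw₁pos : ∀ x, 0 < w₁ x)
    (hw₀smooth : ContDiff ℝ (⊤ : ℕ∞) w₀) (hw₁smooth : ContDiff ℝ (⊤ : ℕ∞) w₁)
    (lam_M c₁ c₂ : ℝ) (hlam : 0 < lam_M) (hc₁ : 0 < c₁) (hc₂ : c₂ ∈ Set.Ico (0:ℝ) 1)
    (hPoincare : ∀ u : EuclideanSpace ℝ (Fin d) → ℝ, ContDiff ℝ (⊤ : ℕ∞) u → HasCompactSupport u →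
      (∫ x, u x * (w₀ x) ^ 2 = 0) →
      lam_M * ∫ x, (u x) ^ 2 * (w₀ x) ^ 2 ≤ ∫ x, ‖fderiv ℝ u x‖ ^ 2 * (w₁ x) ^ 2)
    (hlog : ∀ x, -((w₁ x) ^ 2 * lap (fun y => Real.log (w₁ y)) x) ≤
      c₁ * (w₀ x) ^ 2 + c₂ * ‖fderiv ℝ w₁ x‖ ^ 2) :
    ∀ u : EuclideanSpace ℝ (Fin d) → ℝ, ContDiff ℝ (⊤ : ℕ∞) u → HasCompactSupport u →
      (∫ x, u x * (w₀ x) ^ 2 = 0) →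
      lam_M * (1 - c₂) / (lam_M + c₁) * ∫ x, (u x) ^ 2 * ‖fderiv ℝ w₁ x‖ ^ 2 ≤
        ∫ x, ‖fderiv ℝ u x‖ ^ 2 * (w₁ x) ^ 2 := by
  intro u hu hsupp hmean
  -- continuity facts
  have cu : Continuous u := hu.continuous
  have cw : Continuous w₁ := hw₁smooth.continuous
  have cw0 : Continuous w₀ := hw₀smooth.continuous
  have cP : ∀ i : Fin d, Continuous fun x => fderiv ℝ w₁ x (EuclideanSpace.single i 1) :=
    fun i => cont_fderiv_apply hw₁smooth _
  have cQ : ∀ i : Fin d, Continuous fun x => fderiv ℝ u x (EuclideanSpace.single i 1) :=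
    fun i => cont_fderiv_apply hu _
  have cH : ∀ i : Fin d, Continuous fun x =>
      fderiv ℝ (fun y => fderiv ℝ w₁ y (EuclideanSpace.single i 1)) x
        (EuclideanSpace.single i 1) :=
    fun i => cont_fderiv_apply (contdiff_fderiv_apply hw₁smooth _) _
  -- integrability facts
  have IA : Integrable (fun x => ‖fderiv ℝ u x‖ ^ 2 * (w₁ x) ^ 2) := by
    apply Continuous.integrable_of_hasCompactSupport
    · exact (((hu.continuous_fderiv (by simp)).norm.pow 2).mul (cw.pow 2))
    · exact hcs_aux (hsupp.fderiv ℝ) (fun x hx => by simp [hx])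
  have IS : Integrable (fun x => (u x) ^ 2 * (w₀ x) ^ 2) := by
    apply Continuous.integrable_of_hasCompactSupport
    · exact (cu.pow 2).mul (cw0.pow 2)
    · exact hcs_aux hsupp (fun x hx => by simp [hx])
  have IB : Integrable (fun x => (u x) ^ 2 *
      ∑ i : Fin d, (fderiv ℝ w₁ x (EuclideanSpace.single i 1)) ^ 2) := by
    apply Continuous.integrable_of_hasCompactSupport
    · exact (cu.pow 2).mul (continuous_finset_sum _ fun i _ => (cP i).pow 2)
    · exact hcs_aux hsupp (fun x hx => by simp [hx])
  have I1 : ∀ i : Fin d, Integrable (fun x =>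
      2 * u x * fderiv ℝ u x (EuclideanSpace.single i 1) * w₁ x
        * fderiv ℝ w₁ x (EuclideanSpace.single i 1)) := by
    intro i
    apply Continuous.integrable_of_hasCompactSupport
    · exact ((((continuous_const.mul cu).mul (cQ i)).mul cw).mul (cP i))
    · exact hcs_aux hsupp (fun x hx => by simp [hx])
  have I2 : ∀ i : Fin d, Integrable (fun x =>
      (u x) ^ 2 * (fderiv ℝ w₁ x (EuclideanSpace.single i 1)) ^ 2) := by
    intro i
    apply Continuous.integrable_of_hasCompactSupport
    · exact (cu.pow 2).mul ((cP i).pow 2)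
    · exact hcs_aux hsupp (fun x hx => by simp [hx])
  have I3 : ∀ i : Fin d, Integrable (fun x =>
      (u x) ^ 2 * w₁ x *
        fderiv ℝ (fun y => fderiv ℝ w₁ y (EuclideanSpace.single i 1)) x
          (EuclideanSpace.single i 1)) := by
    intro i
    apply Continuous.integrable_of_hasCompactSupport
    · exact (((cu.pow 2).mul cw).mul (cH i))
    · exact hcs_aux hsupp (fun x hx => by simp [hx])
  have IC : Integrable (fun x => ∑ i : Fin d,
      2 * u x * fderiv ℝ u x (EuclideanSpace.single i 1) * w₁ x
        * fderiv ℝ w₁ x (EuclideanSpace.single i 1)) :=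
    integrable_finset_sum _ (fun i _ => I1 i)
  have ID : Integrable (fun x => ∑ i : Fin d, (u x) ^ 2 * w₁ x *
      fderiv ℝ (fun y => fderiv ℝ w₁ y (EuclideanSpace.single i 1)) x
        (EuclideanSpace.single i 1)) :=
    integrable_finset_sum _ (fun i _ => I3 i)
  have IB' : Integrable (fun x => ∑ i : Fin d,
      (u x) ^ 2 * (fderiv ℝ w₁ x (EuclideanSpace.single i 1)) ^ 2) :=
    integrable_finset_sum _ (fun i _ => I2 i)
  -- Step 1: divergence identity for each direction
  have key0 : ∀ i : Fin d, ∫ x,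
      (2 * u x * fderiv ℝ u x (EuclideanSpace.single i 1) * w₁ x
          * fderiv ℝ w₁ x (EuclideanSpace.single i 1)
        + (u x) ^ 2 * (fderiv ℝ w₁ x (EuclideanSpace.single i 1)) ^ 2
        + (u x) ^ 2 * w₁ x *
          fderiv ℝ (fun y => fderiv ℝ w₁ y (EuclideanSpace.single i 1)) x
            (EuclideanSpace.single i 1)) = 0 := by
    intro i
    have hF : ContDiff ℝ (⊤ : ℕ∞) (fun y => u y ^ 2 *
        (w₁ y * fderiv ℝ w₁ y (EuclideanSpace.single i 1))) := by
      exact (hu.pow 2).mul (hw₁smooth.mul (contdiff_fderiv_apply hw₁smooth _))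
    have hFs : HasCompactSupport (fun y => u y ^ 2 *
        (w₁ y * fderiv ℝ w₁ y (EuclideanSpace.single i 1))) :=
      hcs_aux hsupp (fun x hx => by simp [hx])
    have h := integral_fderiv_eq_zero' hF hFs (EuclideanSpace.single i 1)
    have heq : (fun x => fderiv ℝ (fun y => u y ^ 2 *
        (w₁ y * fderiv ℝ w₁ y (EuclideanSpace.single i 1))) x (EuclideanSpace.single i 1))
        = fun x =>
          2 * u x * fderiv ℝ u x (EuclideanSpace.single i 1) * w₁ x
              * fderiv ℝ w₁ x (EuclideanSpace.single i 1)
            + (u x) ^ 2 * (fderiv ℝ w₁ x (EuclideanSpace.single i 1)) ^ 2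
            + (u x) ^ 2 * w₁ x *
              fderiv ℝ (fun y => fderiv ℝ w₁ y (EuclideanSpace.single i 1)) x
                (EuclideanSpace.single i 1) :=
      funext fun x => expand_deriv hu hw₁smooth i x
    rw [heq] at h
    exact h
  -- Step 2: sum over i
  have key1 : (∫ x, ∑ i : Fin d,
      2 * u x * fderiv ℝ u x (EuclideanSpace.single i 1) * w₁ x
        * fderiv ℝ w₁ x (EuclideanSpace.single i 1))
      + (∫ x, ∑ i : Fin d, (u x) ^ 2 * (fderiv ℝ w₁ x (EuclideanSpace.single i 1)) ^ 2)
      + (∫ x, ∑ i : Fin d, (u x) ^ 2 * w₁ x *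
          fderiv ℝ (fun y => fderiv ℝ w₁ y (EuclideanSpace.single i 1)) x
            (EuclideanSpace.single i 1)) = 0 := by
    have h : ∫ x, ((∑ i : Fin d,
        2 * u x * fderiv ℝ u x (EuclideanSpace.single i 1) * w₁ x
          * fderiv ℝ w₁ x (EuclideanSpace.single i 1))
        + (∑ i : Fin d, (u x) ^ 2 * (fderiv ℝ w₁ x (EuclideanSpace.single i 1)) ^ 2)
        + ∑ i : Fin d, (u x) ^ 2 * w₁ x *
            fderiv ℝ (fun y => fderiv ℝ w₁ y (EuclideanSpace.single i 1)) x
              (EuclideanSpace.single i 1)) = 0 := by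
      have heq : (fun x => ((∑ i : Fin d,
          2 * u x * fderiv ℝ u x (EuclideanSpace.single i 1) * w₁ x
            * fderiv ℝ w₁ x (EuclideanSpace.single i 1))
          + (∑ i : Fin d, (u x) ^ 2 * (fderiv ℝ w₁ x (EuclideanSpace.single i 1)) ^ 2)
          + ∑ i : Fin d, (u x) ^ 2 * w₁ x *
              fderiv ℝ (fun y => fderiv ℝ w₁ y (EuclideanSpace.single i 1)) x
                (EuclideanSpace.single i 1)))
          = fun x => ∑ i : Fin d,
            (2 * u x * fderiv ℝ u x (EuclideanSpace.single i 1) * w₁ x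
                * fderiv ℝ w₁ x (EuclideanSpace.single i 1)
              + (u x) ^ 2 * (fderiv ℝ w₁ x (EuclideanSpace.single i 1)) ^ 2
              + (u x) ^ 2 * w₁ x *
                fderiv ℝ (fun y => fderiv ℝ w₁ y (EuclideanSpace.single i 1)) x
                  (EuclideanSpace.single i 1)) := by
        funext x
        rw [← Finset.sum_add_distrib, ← Finset.sum_add_distrib]
      rw [heq]
      rw [integral_finset_sum]
      · exact Finset.sum_eq_zero fun i _ => key0 i
      · exact fun i _ => by exact ((I1 i).add (I2 i)).add (I3 i)
    have split1 : ∫ x, (((∑ i : Fin d,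
        2 * u x * fderiv ℝ u x (EuclideanSpace.single i 1) * w₁ x
          * fderiv ℝ w₁ x (EuclideanSpace.single i 1))
        + (∑ i : Fin d, (u x) ^ 2 * (fderiv ℝ w₁ x (EuclideanSpace.single i 1)) ^ 2))
        + ∑ i : Fin d, (u x) ^ 2 * w₁ x *
            fderiv ℝ (fun y => fderiv ℝ w₁ y (EuclideanSpace.single i 1)) x
              (EuclideanSpace.single i 1))
        = (∫ x, ((∑ i : Fin d,
            2 * u x * fderiv ℝ u x (EuclideanSpace.single i 1) * w₁ x
              * fderiv ℝ w₁ x (EuclideanSpace.single i 1))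
            + (∑ i : Fin d, (u x) ^ 2 * (fderiv ℝ w₁ x (EuclideanSpace.single i 1)) ^ 2)))
          + ∫ x, ∑ i : Fin d, (u x) ^ 2 * w₁ x *
              fderiv ℝ (fun y => fderiv ℝ w₁ y (EuclideanSpace.single i 1)) x
                (EuclideanSpace.single i 1) :=
      integral_add (by exact IC.add IB') ID
    have split2 := integral_add IC IB'
    rw [split1, split2] at h
    exact h
  -- rewrite norms as sums
  have hnormu : ∀ x : EuclideanSpace ℝ (Fin d), ‖fderiv ℝ u x‖ ^ 2
      = ∑ i : Fin d, (fderiv ℝ u x (EuclideanSpace.single i 1)) ^ 2 :=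
    fun x => norm_sq_dual _
  have hnormw : ∀ x : EuclideanSpace ℝ (Fin d), ‖fderiv ℝ w₁ x‖ ^ 2
      = ∑ i : Fin d, (fderiv ℝ w₁ x (EuclideanSpace.single i 1)) ^ 2 :=
    fun x => norm_sq_dual _
  -- D = T + B pointwise, where T has the log-Laplacian integrand
  have hDpt : ∀ x : EuclideanSpace ℝ (Fin d),
      (∑ i : Fin d, (u x) ^ 2 * w₁ x *
          fderiv ℝ (fun y => fderiv ℝ w₁ y (EuclideanSpace.single i 1)) x
            (EuclideanSpace.single i 1))
      = (u x) ^ 2 * ((w₁ x) ^ 2 * lap (fun y => Real.log (w₁ y)) x)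
        + (u x) ^ 2 * ∑ i : Fin d, (fderiv ℝ w₁ x (EuclideanSpace.single i 1)) ^ 2 := by
    intro x
    have e : (∑ i : Fin d, (u x) ^ 2 * w₁ x *
        fderiv ℝ (fun y => fderiv ℝ w₁ y (EuclideanSpace.single i 1)) x
          (EuclideanSpace.single i 1))
        = (u x) ^ 2 * (w₁ x * ∑ i : Fin d,
            fderiv ℝ (fun y => fderiv ℝ w₁ y (EuclideanSpace.single i 1)) x
              (EuclideanSpace.single i 1)) := by
      rw [Finset.mul_sum, Finset.mul_sum]
      exact Finset.sum_congr rfl fun i _ => by ring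
    rw [e, lap_log_identity hw₁pos hw₁smooth x]
    ring
  have IT : Integrable (fun x =>
      (u x) ^ 2 * ((w₁ x) ^ 2 * lap (fun y => Real.log (w₁ y)) x)) := by
    apply (ID.sub IB).congr
    filter_upwards with x
    show (∑ i : Fin d, (u x) ^ 2 * w₁ x *
        fderiv ℝ (fun y => fderiv ℝ w₁ y (EuclideanSpace.single i 1)) x
          (EuclideanSpace.single i 1))
      - (u x) ^ 2 * ∑ i : Fin d, (fderiv ℝ w₁ x (EuclideanSpace.single i 1)) ^ 2
      = (u x) ^ 2 * ((w₁ x) ^ 2 * lap (fun y => Real.log (w₁ y)) x)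
    rw [hDpt x]; ring
  have hD : (∫ x, ∑ i : Fin d, (u x) ^ 2 * w₁ x *
      fderiv ℝ (fun y => fderiv ℝ w₁ y (EuclideanSpace.single i 1)) x
        (EuclideanSpace.single i 1))
      = (∫ x, (u x) ^ 2 * ((w₁ x) ^ 2 * lap (fun y => Real.log (w₁ y)) x))
        + ∫ x, (u x) ^ 2 * ∑ i : Fin d, (fderiv ℝ w₁ x (EuclideanSpace.single i 1)) ^ 2 := by
    rw [← integral_add IT IB]
    exact integral_congr_ae (Filter.Eventually.of_forall fun x => hDpt x)
  -- B' = B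
  have hB' : (∫ x, ∑ i : Fin d, (u x) ^ 2 * (fderiv ℝ w₁ x (EuclideanSpace.single i 1)) ^ 2)
      = ∫ x, (u x) ^ 2 * ∑ i : Fin d, (fderiv ℝ w₁ x (EuclideanSpace.single i 1)) ^ 2 := by
    apply integral_congr_ae
    filter_upwards with x
    rw [Finset.mul_sum]
  -- Cauchy-Schwarz step: -(B + A) ≤ C
  have hCS : -((∫ x, (u x) ^ 2 * ∑ i : Fin d,
        (fderiv ℝ w₁ x (EuclideanSpace.single i 1)) ^ 2)
      + ∫ x, ‖fderiv ℝ u x‖ ^ 2 * (w₁ x) ^ 2)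
      ≤ ∫ x, ∑ i : Fin d,
        2 * u x * fderiv ℝ u x (EuclideanSpace.single i 1) * w₁ x
          * fderiv ℝ w₁ x (EuclideanSpace.single i 1) := by
    have hmono : ∫ x, (-((u x) ^ 2 * (∑ i : Fin d,
          (fderiv ℝ w₁ x (EuclideanSpace.single i 1)) ^ 2)
          + ‖fderiv ℝ u x‖ ^ 2 * (w₁ x) ^ 2))
        ≤ ∫ x, ∑ i : Fin d,
          2 * u x * fderiv ℝ u x (EuclideanSpace.single i 1) * w₁ x
            * fderiv ℝ w₁ x (EuclideanSpace.single i 1) := by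
      apply integral_mono (by exact (IB.add IA).neg) IC
      intro x
      simp only [Pi.add_apply, Pi.neg_apply]
      have expand : ∑ i : Fin d,
          (u x * fderiv ℝ w₁ x (EuclideanSpace.single i 1)
            + w₁ x * fderiv ℝ u x (EuclideanSpace.single i 1)) ^ 2
          = (u x) ^ 2 * (∑ i : Fin d, (fderiv ℝ w₁ x (EuclideanSpace.single i 1)) ^ 2)
            + (w₁ x) ^ 2 * (∑ i : Fin d, (fderiv ℝ u x (EuclideanSpace.single i 1)) ^ 2)
            + ∑ i : Fin d, 2 * u x * fderiv ℝ u x (EuclideanSpace.single i 1) * w₁ x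
                * fderiv ℝ w₁ x (EuclideanSpace.single i 1) := by
        simp only [Finset.mul_sum, ← Finset.sum_add_distrib]
        exact Finset.sum_congr rfl fun i _ => by ring
      have hnn : (0:ℝ) ≤ ∑ i : Fin d,
          (u x * fderiv ℝ w₁ x (EuclideanSpace.single i 1)
            + w₁ x * fderiv ℝ u x (EuclideanSpace.single i 1)) ^ 2 :=
        Finset.sum_nonneg fun i _ => sq_nonneg _
      rw [expand] at hnn
      have hnu := hnormu x
      nlinarith [hnn, hnu]
    rw [integral_neg, integral_add IB IA] at hmono
    linarith
  -- log-Laplacian bound: -(c₁ S + c₂ B) ≤ T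
  have hlogT : -(c₁ * (∫ x, (u x) ^ 2 * (w₀ x) ^ 2)
      + c₂ * ∫ x, (u x) ^ 2 * ∑ i : Fin d,
          (fderiv ℝ w₁ x (EuclideanSpace.single i 1)) ^ 2)
      ≤ ∫ x, (u x) ^ 2 * ((w₁ x) ^ 2 * lap (fun y => Real.log (w₁ y)) x) := by
    have hmono : ∫ x, -((u x) ^ 2 * ((w₁ x) ^ 2 * lap (fun y => Real.log (w₁ y)) x))
        ≤ ∫ x, ((u x) ^ 2 * (c₁ * (w₀ x) ^ 2)
          + (u x) ^ 2 * (c₂ * ∑ i : Fin d,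
            (fderiv ℝ w₁ x (EuclideanSpace.single i 1)) ^ 2)) := by
      apply integral_mono IT.neg ((IS.const_mul c₁).congr ?_ |>.add
        ((IB.const_mul c₂).congr ?_))
      · intro x
        have h := hlog x
        rw [hnormw x] at h
        have h2 := mul_le_mul_of_nonneg_left h (sq_nonneg (u x))
        calc -((u x) ^ 2 * ((w₁ x) ^ 2 * lap (fun y => Real.log (w₁ y)) x))
            = (u x) ^ 2 * (-((w₁ x) ^ 2 * lap (fun y => Real.log (w₁ y)) x)) := by ring
          _ ≤ (u x) ^ 2 * (c₁ * (w₀ x) ^ 2 + c₂ * ∑ i : Fin d,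
              (fderiv ℝ w₁ x (EuclideanSpace.single i 1)) ^ 2) := h2
          _ = (u x) ^ 2 * (c₁ * (w₀ x) ^ 2)
              + (u x) ^ 2 * (c₂ * ∑ i : Fin d,
                (fderiv ℝ w₁ x (EuclideanSpace.single i 1)) ^ 2) := by ring
      · filter_upwards with x; ring
      · filter_upwards with x; ring
    rw [integral_neg] at hmono
    rw [integral_add ((IS.const_mul c₁).congr (by filter_upwards with x; ring))
      ((IB.const_mul c₂).congr (by filter_upwards with x; ring))] at hmono
    have e1 : ∫ x, (u x) ^ 2 * (c₁ * (w₀ x) ^ 2)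
        = c₁ * ∫ x, (u x) ^ 2 * (w₀ x) ^ 2 := by
      have hs := integral_smul (μ := (volume : Measure (EuclideanSpace ℝ (Fin d)))) c₁
        (fun x => (u x) ^ 2 * (w₀ x) ^ 2)
      simp only [smul_eq_mul] at hs
      rw [← hs]
      congr 1; funext x; ring
    have e2 : ∫ x, (u x) ^ 2 * (c₂ * ∑ i : Fin d,
        (fderiv ℝ w₁ x (EuclideanSpace.single i 1)) ^ 2)
        = c₂ * ∫ x, (u x) ^ 2 * ∑ i : Fin d,
            (fderiv ℝ w₁ x (EuclideanSpace.single i 1)) ^ 2 := by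
      have hs := integral_smul (μ := (volume : Measure (EuclideanSpace ℝ (Fin d)))) c₂
        (fun x => (u x) ^ 2 * ∑ i : Fin d, (fderiv ℝ w₁ x (EuclideanSpace.single i 1)) ^ 2)
      simp only [smul_eq_mul] at hs
      rw [← hs]
      congr 1; funext x; ring
    rw [e1, e2] at hmono
    linarith
  -- Poincaré
  have hP := hPoincare u hu hsupp hmean
  -- assemble
  set A := ∫ x, ‖fderiv ℝ u x‖ ^ 2 * (w₁ x) ^ 2 with hA
  set S := ∫ x, (u x) ^ 2 * (w₀ x) ^ 2 with hS
  set B := ∫ x, (u x) ^ 2 * ∑ i : Fin d,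
      (fderiv ℝ w₁ x (EuclideanSpace.single i 1)) ^ 2 with hBdef
  set T := ∫ x, (u x) ^ 2 * ((w₁ x) ^ 2 * lap (fun y => Real.log (w₁ y)) x) with hT
  set C := ∫ x, ∑ i : Fin d,
      2 * u x * fderiv ℝ u x (EuclideanSpace.single i 1) * w₁ x
        * fderiv ℝ w₁ x (EuclideanSpace.single i 1) with hC
  have hgoalB : (∫ x, (u x) ^ 2 * ‖fderiv ℝ w₁ x‖ ^ 2) = B := by
    rw [hBdef]
    exact integral_congr_ae (Filter.Eventually.of_forall fun x =>
      congrArg (fun t => (u x) ^ 2 * t) (hnormw x))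
  rw [hgoalB]
  -- key1 : C + B' + D = 0, with B' = B and D = T + B
  rw [hB', hD] at key1
  -- so C + 2B + T = 0 ; hCS : -(B+A) ≤ C ; hlogT : -(c₁ S + c₂ B) ≤ T ; hP : lam S ≤ A
  obtain ⟨hc₂0, hc₂1⟩ := hc₂
  have hfinal : lam_M * (1 - c₂) * B ≤ (lam_M + c₁) * A := by
    nlinarith [mul_le_mul_of_nonneg_left hP (le_of_lt hc₁),
      mul_le_mul_of_nonneg_left hCS (le_of_lt hlam),
      mul_le_mul_of_nonneg_left hlogT (le_of_lt hlam)]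
  rw [div_mul_eq_mul_div, div_le_iff₀ (by linarith)]
  linarith [hfinal]
end
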